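/- For two forward null vectors b, b′ ∈ L⁺_{n+1} and the corresponding functions f_b, f_{b′}(x) = (√(n+1)/2) log((·ᵀx)²/(xᵀAx)), the g-inner product of their gradients satisfies gⁱʲ ∂ᵢ f_b ∂ⱼ f_{b′} = 1 − (bᵀBb′) · exp(−(f_b(x) + f_{b′}(x))/√(n+1)) on the interior of the Lorentz cone. -/

import Mathlib

open Real Matrix

/-- The Lorentzian matrix `A = diag(1, -1, …, -1)` on `ℝ^{n+1}`. -/
def lorentzA (n : ℕ) : Matrix (Fin (n + 1)) (Fin (n + 1)) ℝ :=
  Matrix.diagonal fun i => if i = 0 then 1 else -1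

/-- The Lorentz quadratic form `xᵀAx`. -/
def lorentzQ (n : ℕ) (x : Fin (n + 1) → ℝ) : ℝ :=
  x ⬝ᵥ (lorentzA n).mulVec x

/-- The canonical barrier of the Lorentz cone. -/
noncomputable def lorentzF (n : ℕ) (x : Fin (n + 1) → ℝ) : ℝ :=
  -(((n : ℝ) + 1) / 2) * Real.log (lorentzQ n x) + (((n : ℝ) + 1) / 2) * Real.log ((n : ℝ) + 1)

/-- The Hessian metric of the Lorentz barrier, in explicit form. -/
noncomputable def lorentzG (n : ℕ) (x : Fin (n + 1) → ℝ) : Matrix (Fin (n + 1)) (Fin (n + 1)) ℝ :=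
  Matrix.of fun i j =>
    -(((n : ℝ) + 1) / lorentzQ n x) *
      (lorentzA n i j -
        2 * ((lorentzA n).mulVec x i) * ((lorentzA n).mulVec x j) / lorentzQ n x)

/-- The claimed inverse metric `gⁱʲ = -(1/(n+1))((xᵀAx)Bⁱʲ - 2xⁱxʲ)` (with `B = A⁻¹ = A`). -/
noncomputable def lorentzGinv (n : ℕ) (x : Fin (n + 1) → ℝ) :
    Matrix (Fin (n + 1)) (Fin (n + 1)) ℝ :=
  Matrix.of fun i j => -(1 / ((n : ℝ) + 1)) * (lorentzQ n x * lorentzA n i j - 2 * x i * x j)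

/-- The auxiliary function `f_b(x) = (√(n+1)/2) log((bᵀx)²/(xᵀAx))`. -/
noncomputable def lorentzFb (n : ℕ) (b x : Fin (n + 1) → ℝ) : ℝ :=
  (Real.sqrt ((n : ℝ) + 1) / 2) * Real.log ((b ⬝ᵥ x) ^ 2 / lorentzQ n x)

lemma dotA (n : ℕ) (y z : Fin (n + 1) → ℝ) :
    y ⬝ᵥ (lorentzA n).mulVec z = ∑ i, (if i = 0 then (1:ℝ) else -1) * (y i * z i) := by
  simp only [dotProduct, lorentzA, Matrix.mulVec_diagonal]
  exact Finset.sum_congr rfl fun i _ => by ring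

lemma lorentzQ_eq (n : ℕ) (x : Fin (n + 1) → ℝ) :
    lorentzQ n x = ∑ i, (if i = 0 then (1:ℝ) else -1) * (x i * x i) := by
  rw [lorentzQ, dotA]

lemma split_sum (n : ℕ) (f : Fin (n+1) → ℝ) :
    ∑ i, (if i = 0 then (1:ℝ) else -1) * f i = f 0 - ∑ i : Fin n, f i.succ := by
  rw [Fin.sum_univ_succ]
  simp [Fin.succ_ne_zero, sub_eq_add_neg]

lemma bdot_pos (n : ℕ) (b x : Fin (n + 1) → ℝ) (hb0 : 0 < b 0)
    (hbnull : b ⬝ᵥ (lorentzA n).mulVec b = 0) (hx0 : 0 < x 0) (hQ : 0 < lorentzQ n x) :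
    0 < b ⬝ᵥ x := by
  rw [dotA] at hbnull
  rw [lorentzQ_eq] at hQ
  have e1 := split_sum n (fun i => b i * b i)
  have e2 := split_sum n (fun i => x i * x i)
  have h1 : (b 0) * (b 0) - ∑ i : Fin n, b i.succ * b i.succ = 0 := by
    rw [← e1]; exact hbnull
  have h2 : 0 < x 0 * x 0 - ∑ i : Fin n, x i.succ * x i.succ := by
    rw [e2] at hQ; exact hQ
  have hcs := Finset.sum_mul_sq_le_sq_mul_sq Finset.univ (fun i : Fin n => b i.succ)
    (fun i => x i.succ)
  have hb : (∑ i : Fin n, b i.succ ^ 2) = b 0 * b 0 := by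
    have : ∀ i : Fin n, b i.succ ^ 2 = b i.succ * b i.succ := fun i => sq (b i.succ)
    simp_rw [this]; linarith
  have hx : (∑ i : Fin n, x i.succ ^ 2) = ∑ i : Fin n, x i.succ * x i.succ := by
    exact Finset.sum_congr rfl fun i _ => sq (x i.succ)
  rw [hb, hx] at hcs
  have hdot : b ⬝ᵥ x = b 0 * x 0 + ∑ i : Fin n, b i.succ * x i.succ := by
    rw [dotProduct, Fin.sum_univ_succ]
  rw [hdot]
  have hP := mul_pos hb0 hx0
  have h3 : (∑ i : Fin n, b i.succ * x i.succ) ^ 2 < (b 0 * x 0) ^ 2 := by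
    nlinarith [mul_pos (mul_pos hb0 hb0) h2]
  nlinarith [h3, hP]

lemma hasFDeriv_dot (n : ℕ) (b x : Fin (n + 1) → ℝ) :
    HasFDerivAt (fun y : Fin (n+1) → ℝ => b ⬝ᵥ y)
      (∑ j, b j • ContinuousLinearMap.proj (R := ℝ) (φ := fun _ : Fin (n+1) => ℝ) j) x := by
  simp only [dotProduct]
  exact HasFDerivAt.fun_sum fun j _ =>
    ((ContinuousLinearMap.proj (R := ℝ) (φ := fun _ : Fin (n+1) => ℝ) j).hasFDerivAt
      (x := x)).const_mul (b j)

lemma hasFDeriv_Q (n : ℕ) (x : Fin (n + 1) → ℝ) :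
    HasFDerivAt (lorentzQ n)
      (∑ j, ((if j = 0 then (1:ℝ) else -1) * (2 * x j)) •
        ContinuousLinearMap.proj (R := ℝ) (φ := fun _ : Fin (n+1) => ℝ) j) x := by
  have e : lorentzQ n = fun y => ∑ i, (if i = 0 then (1:ℝ) else -1) * (y i * y i) :=
    funext (lorentzQ_eq n)
  rw [e]
  refine HasFDerivAt.fun_sum fun j _ => ?_
  have hp := (ContinuousLinearMap.proj (R := ℝ) (φ := fun _ : Fin (n+1) => ℝ) j).hasFDerivAt
    (x := x)
  have h := (hp.fun_mul hp).const_mul (if j = 0 then (1:ℝ) else -1)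
  simp only [ContinuousLinearMap.proj_apply] at h
  refine h.congr_fderiv ?_
  ext y
  by_cases hj : j = 0 <;> simp [hj] <;> ring

lemma fderiv_Fb (n : ℕ) (b x : Fin (n + 1) → ℝ) (hβ : b ⬝ᵥ x ≠ 0)
    (hQ : lorentzQ n x ≠ 0) (i : Fin (n + 1)) :
    fderiv ℝ (lorentzFb n b) x (Pi.single i 1) =
      Real.sqrt ((n : ℝ) + 1) *
        (b i / (b ⬝ᵥ x) - (if i = 0 then (1:ℝ) else -1) * x i / lorentzQ n x) := by
  have hb := hasFDeriv_dot n b x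
  have hq := hasFDeriv_Q n x
  have hsq := hb.mul hb
  have hinv := (hasDerivAt_inv hQ).comp_hasFDerivAt x hq
  have hr := hsq.mul hinv
  have hrne : (b ⬝ᵥ x) * (b ⬝ᵥ x) * (lorentzQ n x)⁻¹ ≠ 0 :=
    mul_ne_zero (mul_ne_zero hβ hβ) (inv_ne_zero hQ)
  have hlog := (hr.log hrne).const_mul (Real.sqrt ((n : ℝ) + 1) / 2)
  have hFb : lorentzFb n b = fun y =>
      (Real.sqrt ((n : ℝ) + 1) / 2) * Real.log ((b ⬝ᵥ y) * (b ⬝ᵥ y) * (lorentzQ n y)⁻¹) := by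
    funext y; rw [lorentzFb, sq, div_eq_mul_inv ((b ⬝ᵥ y) * (b ⬝ᵥ y))]
  simp only [Function.comp_def, Pi.mul_apply] at hlog
  rw [hFb, hlog.fderiv]
  simp only [ContinuousLinearMap.coe_smul', Pi.smul_apply, ContinuousLinearMap.add_apply,
    ContinuousLinearMap.smul_apply, ContinuousLinearMap.neg_apply, ContinuousLinearMap.sum_apply,
    ContinuousLinearMap.proj_apply, smul_eq_mul, Pi.single_apply, mul_ite, mul_one, mul_zero,
    Finset.sum_ite_eq', Finset.mem_univ, if_true]
  field_simp
  split_ifs <;> ring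

lemma double_sum (n : ℕ) (x u v : Fin (n + 1) → ℝ) :
    ∑ i, ∑ j, lorentzGinv n x i j * u i * v j =
      -(1 / ((n : ℝ) + 1)) *
        (lorentzQ n x * ∑ i, (if i = 0 then (1:ℝ) else -1) * (u i * v i) -
          2 * (∑ i, x i * u i) * (∑ j, x j * v j)) := by
  have h1 : ∀ i j : Fin (n + 1), lorentzGinv n x i j * u i * v j =
      -(1 / ((n : ℝ) + 1)) * lorentzQ n x *
        ((if i = j then (if i = 0 then (1:ℝ) else -1) else 0) * (u i * v j)) +
      (2 / ((n : ℝ) + 1)) * ((x i * u i) * (x j * v j)) := by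
    intro i j
    simp only [lorentzGinv, lorentzA, Matrix.of_apply, Matrix.diagonal_apply]
    ring
  have h2 : ∀ i : Fin (n + 1),
      ∑ j, ((if i = j then (if i = 0 then (1:ℝ) else -1) else 0) * (u i * v j)) =
        (if i = 0 then (1:ℝ) else -1) * (u i * v i) := by
    intro i
    rw [Finset.sum_eq_single i]
    · simp
    · intro j _ hj
      rw [if_neg (fun h => hj h.symm), zero_mul]
    · intro h; exact absurd (Finset.mem_univ i) h
  simp_rw [h1, Finset.sum_add_distrib, ← Finset.mul_sum, h2, ← Finset.sum_mul]
  ring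

lemma sum_x_u (n : ℕ) (b x : Fin (n + 1) → ℝ) (hβ : b ⬝ᵥ x ≠ 0) (hQ : lorentzQ n x ≠ 0) :
    ∑ i, x i * (Real.sqrt ((n : ℝ) + 1) *
        (b i / (b ⬝ᵥ x) - (if i = 0 then (1:ℝ) else -1) * x i / lorentzQ n x)) = 0 := by
  have key : ∀ i : Fin (n + 1), x i * (Real.sqrt ((n : ℝ) + 1) *
      (b i / (b ⬝ᵥ x) - (if i = 0 then (1:ℝ) else -1) * x i / lorentzQ n x)) =
      (Real.sqrt ((n : ℝ) + 1) / (b ⬝ᵥ x)) * (b i * x i) -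
      (Real.sqrt ((n : ℝ) + 1) / lorentzQ n x) *
        ((if i = 0 then (1:ℝ) else -1) * (x i * x i)) := by
    intro i; ring
  rw [Finset.sum_congr rfl fun i _ => key i, Finset.sum_sub_distrib,
    ← Finset.mul_sum, ← Finset.mul_sum, ← lorentzQ_eq]
  have hbx : (∑ i, b i * x i) = b ⬝ᵥ x := rfl
  rw [hbx]
  field_simp
  ring

lemma sum_d_uv (n : ℕ) (b b' x : Fin (n + 1) → ℝ) (hβ : b ⬝ᵥ x ≠ 0) (hβ' : b' ⬝ᵥ x ≠ 0)
    (hQ : lorentzQ n x ≠ 0) :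
    ∑ i, (if i = 0 then (1:ℝ) else -1) *
      ((Real.sqrt ((n : ℝ) + 1) *
          (b i / (b ⬝ᵥ x) - (if i = 0 then (1:ℝ) else -1) * x i / lorentzQ n x)) *
       (Real.sqrt ((n : ℝ) + 1) *
          (b' i / (b' ⬝ᵥ x) - (if i = 0 then (1:ℝ) else -1) * x i / lorentzQ n x))) =
    (Real.sqrt ((n : ℝ) + 1) * Real.sqrt ((n : ℝ) + 1)) *
      ((b ⬝ᵥ (lorentzA n).mulVec b') / ((b ⬝ᵥ x) * (b' ⬝ᵥ x)) - 1 / lorentzQ n x) := by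
  set s := Real.sqrt ((n : ℝ) + 1) with hs
  have key : ∀ i : Fin (n + 1), (if i = 0 then (1:ℝ) else -1) *
      ((s * (b i / (b ⬝ᵥ x) - (if i = 0 then (1:ℝ) else -1) * x i / lorentzQ n x)) *
       (s * (b' i / (b' ⬝ᵥ x) - (if i = 0 then (1:ℝ) else -1) * x i / lorentzQ n x))) =
      (s * s) * ((1 / ((b ⬝ᵥ x) * (b' ⬝ᵥ x))) * ((if i = 0 then (1:ℝ) else -1) * (b i * b' i))) -
      (s * s / ((b ⬝ᵥ x) * lorentzQ n x)) * (b i * x i) -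
      (s * s / ((b' ⬝ᵥ x) * lorentzQ n x)) * (b' i * x i) +
      (s * s / (lorentzQ n x * lorentzQ n x)) * ((if i = 0 then (1:ℝ) else -1) * (x i * x i)) := by
    intro i
    by_cases hi : i = 0
    · simp only [hi, eq_self_iff_true, if_true]; ring
    · simp only [if_neg hi]; ring
  rw [Finset.sum_congr rfl fun i _ => key i]
  simp_rw [Finset.sum_add_distrib, Finset.sum_sub_distrib, ← Finset.mul_sum]
  rw [← lorentzQ_eq, ← dotA]
  have hbx : (∑ i, b i * x i) = b ⬝ᵥ x := rfl
  have hb'x : (∑ i, b' i * x i) = b' ⬝ᵥ x := rfl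
  rw [hbx, hb'x]
  field_simp
  ring

/-- Covariance formula: for forward null vectors `b, b′`,
`∇f_b · ∇f_{b′} = 1 - (bᵀBb′) exp(-(f_b + f_{b′})/√(n+1))`. -/
theorem lorentz_fb_gradients_inner (n : ℕ) (b b' : Fin (n + 1) → ℝ)
    (hb0 : 0 < b 0) (hbnull : b ⬝ᵥ (lorentzA n).mulVec b = 0)
    (hb'0 : 0 < b' 0) (hb'null : b' ⬝ᵥ (lorentzA n).mulVec b' = 0) :
    ∀ x : Fin (n + 1) → ℝ, 0 < x 0 → 0 < lorentzQ n x →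
      ∑ i, ∑ j, lorentzGinv n x i j *
          fderiv ℝ (lorentzFb n b) x (Pi.single i 1) *
          fderiv ℝ (lorentzFb n b') x (Pi.single j 1) =
        1 - (b ⬝ᵥ (lorentzA n).mulVec b') *
          Real.exp (-(lorentzFb n b x + lorentzFb n b' x) / Real.sqrt ((n : ℝ) + 1)) := by
  intro x hx0 hQpos
  have hQ : lorentzQ n x ≠ 0 := ne_of_gt hQpos
  have hβpos := bdot_pos n b x hb0 hbnull hx0 hQpos
  have hβ'pos := bdot_pos n b' x hb'0 hb'null hx0 hQpos
  have hβ : b ⬝ᵥ x ≠ 0 := ne_of_gt hβpos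
  have hβ' : b' ⬝ᵥ x ≠ 0 := ne_of_gt hβ'pos
  have hn1 : (0:ℝ) < (n : ℝ) + 1 := by positivity
  have hss : Real.sqrt ((n : ℝ) + 1) * Real.sqrt ((n : ℝ) + 1) = (n : ℝ) + 1 :=
    Real.mul_self_sqrt hn1.le
  have hspos : (0:ℝ) < Real.sqrt ((n : ℝ) + 1) := Real.sqrt_pos.mpr hn1
  -- exponential part
  have hexp : Real.exp (-(lorentzFb n b x + lorentzFb n b' x) / Real.sqrt ((n : ℝ) + 1)) =
      lorentzQ n x / ((b ⬝ᵥ x) * (b' ⬝ᵥ x)) := by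
    have harg : -(lorentzFb n b x + lorentzFb n b' x) / Real.sqrt ((n : ℝ) + 1) =
        Real.log (lorentzQ n x) - Real.log (b ⬝ᵥ x) - Real.log (b' ⬝ᵥ x) := by
      rw [lorentzFb, lorentzFb,
        Real.log_div (pow_ne_zero 2 hβ) hQ, Real.log_div (pow_ne_zero 2 hβ') hQ,
        Real.log_pow, Real.log_pow]
      field_simp
      ring
    rw [harg, Real.exp_sub, Real.exp_sub, Real.exp_log hQpos, Real.exp_log hβpos,
      Real.exp_log hβ'pos]
    rw [div_div]
  rw [hexp]
  -- rewrite the derivatives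
  simp only [fderiv_Fb n b x hβ hQ, fderiv_Fb n b' x hβ' hQ]
  rw [double_sum n x
    (fun i => Real.sqrt ((n : ℝ) + 1) *
      (b i / (b ⬝ᵥ x) - (if i = 0 then (1:ℝ) else -1) * x i / lorentzQ n x))
    (fun i => Real.sqrt ((n : ℝ) + 1) *
      (b' i / (b' ⬝ᵥ x) - (if i = 0 then (1:ℝ) else -1) * x i / lorentzQ n x))]
  rw [sum_d_uv n b b' x hβ hβ' hQ, sum_x_u n b x hβ hQ, sum_x_u n b' x hβ' hQ, hss]
  field_simp
  ring
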